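/- arXiv:2501.14725 — 5 statements merged into one kernel-verified Lean document; each statement's English description precedes it below -/
import Mathlib

section
/- For every real ε > 0 there exists N₀ ∈ ℕ such that for every finite set A of positive integers whose sum N = ∑_{a ∈ A} a satisfies N ≥ N₀, one has ∑_{(a,b) ∈ A×A} gcd(a,b) ≤ N^{1+ε}. In particular, if the elements of A sum to N, then ∑_{a,b ∈ A} gcd(a,b) ≤ N^{1+o(1)}. -/
/-!
Since `gcd(a, b) = ∑_{d ∣ gcd(a, b)} φ(d)` and `φ(d) ≤ d`, exchanging the sums gives
`∑_{a,b ∈ A} gcd(a, b) ≤ ∑_d d·|A_d|²`, where `A_d` is the set of multiples of `d` in `A`.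
The elements of `A_d` are distinct positive multiples of `d`, so `d·|A_d|² ≤ 2 ∑_{a ∈ A_d} a`,
and summing over `d` yields `∑ gcd(a, b) ≤ 2 ∑_{a ∈ A} a·τ(a) ≤ 2 N max_{a ∈ A} τ(a)`.
The divisor bound `τ(n) ≤ C_δ n^δ` (prime by prime, `(e + 1) / p^{eδ} ≤ 1` once `p^δ ≥ 2`, and
Bernoulli's inequality bounds the finitely many other factors) with `δ = ε / 2` then gives
`2 C N^{1 + ε/2} ≤ N^{1 + ε}` as soon as `N^{ε/2} ≥ 2C`.
-/

open Finset

lemma succ_le_pow_of_two_le {y : ℝ} (hy : 2 ≤ y) (e : ℕ) : (e + 1 : ℝ) ≤ y ^ e :=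
  calc (e + 1 : ℝ) ≤ (1 + 1) ^ e := by
        simpa [add_comm] using one_add_mul_le_pow (by norm_num : (-2 : ℝ) ≤ 1) e
    _ ≤ y ^ e := pow_le_pow_left₀ (by norm_num) (by linarith) e

lemma succ_le_mul_pow_of_one_lt {c y : ℝ} (hc : 1 < c) (hcy : c ≤ y) (e : ℕ) :
    (e + 1 : ℝ) ≤ c / (c - 1) * y ^ e := by
  have bernoulli : 1 + e * (c - 1) ≤ c ^ e := by
    simpa using one_add_mul_le_pow (by linarith : -2 ≤ c - 1) e
  have hc' : 0 < c - 1 := by linarith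
  calc (e + 1 : ℝ) ≤ c / (c - 1) * (1 + e * (c - 1)) := by
        have expand : c / (c - 1) * (1 + e * (c - 1)) = c / (c - 1) + c * e := by
          field_simp
        have : 1 ≤ c / (c - 1) := by rw [le_div_iff₀ hc']; linarith
        nlinarith [(e.cast_nonneg : (0 : ℝ) ≤ e)]
    _ ≤ c / (c - 1) * y ^ e := by gcongr; exact bernoulli.trans (by gcongr)

lemma Nat.cast_rpow_eq_prod_primeFactors {n : ℕ} (hn : n ≠ 0) (δ : ℝ) :
    (n : ℝ) ^ δ = ∏ p ∈ n.primeFactors, ((p : ℝ) ^ δ) ^ n.factorization p := by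
  conv_lhs => rw [Nat.prod_primeFactors_pow_factorization hn]
  push_cast
  rw [← Real.finsetProd_rpow _ _ fun p _ => by positivity]
  exact prod_congr rfl fun p _ => (Real.rpow_pow_comm p.cast_nonneg δ _).symm

theorem Nat.card_divisors_le_mul_rpow {δ : ℝ} (hδ : 0 < δ) :
    ∃ C > 0, ∀ n : ℕ, n ≠ 0 → (#n.divisors : ℝ) ≤ C * n ^ δ := by
  set c : ℝ := 2 ^ δ
  have hc : 1 < c := Real.one_lt_rpow (by norm_num) hδ
  set K : ℝ := c / (c - 1)
  have hK : 1 ≤ K := by rw [le_div_iff₀ (by linarith)]; linarith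
  set B : ℕ := ⌊(2 : ℝ) ^ δ⁻¹⌋₊ + 1
  let f : ℕ → ℝ := fun p => if (p : ℝ) ^ δ < 2 then K else 1
  have local_bound (p : ℕ) (hp : p.Prime) (e : ℕ) : (e + 1 : ℝ) ≤ f p * ((p : ℝ) ^ δ) ^ e := by
    by_cases hsmall : (p : ℝ) ^ δ < 2
    · simp only [f, hsmall, if_true]
      exact succ_le_mul_pow_of_one_lt hc
        (Real.rpow_le_rpow (by norm_num) (by exact_mod_cast hp.two_le) hδ.le) e
    · simpa [f, hsmall] using succ_le_pow_of_two_le (not_lt.1 hsmall) e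
  have small_lt (p : ℕ) (hp : (p : ℝ) ^ δ < 2) : p < B := by
    have : (p : ℝ) < 2 ^ δ⁻¹ := by
      rwa [← Real.rpow_lt_rpow_iff (by positivity) (by positivity) hδ,
        Real.rpow_inv_rpow (by norm_num) hδ.ne']
    exact Nat.lt_succ_of_le (Nat.le_floor this.le)
  have prod_le (s : Finset ℕ) : ∏ p ∈ s, f p ≤ K ^ B := by
    rw [prod_ite, prod_const_one, mul_one, prod_const]
    refine pow_le_pow_right₀ hK ((card_le_card fun p hp => ?_).trans (card_range B).le)
    exact mem_range.2 (small_lt p (mem_filter.1 hp).2)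
  refine ⟨K ^ B, by positivity, fun n hn => ?_⟩
  calc (#n.divisors : ℝ) = ∏ p ∈ n.primeFactors, ((n.factorization p : ℝ) + 1) := by
        rw [Nat.card_divisors hn]; push_cast; rfl
    _ ≤ ∏ p ∈ n.primeFactors, f p * ((p : ℝ) ^ δ) ^ n.factorization p :=
        prod_le_prod (fun _ _ => by positivity)
          fun p hp => local_bound p (Nat.prime_of_mem_primeFactors hp) _
    _ = (∏ p ∈ n.primeFactors, f p) * n ^ δ := by
        rw [prod_mul_distrib, Nat.cast_rpow_eq_prod_primeFactors hn]
    _ ≤ K ^ B * n ^ δ := by gcongr; exact prod_le _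

lemma card_mul_card_le_two_mul_sum {S : Finset ℕ} (hS : 0 ∉ S) : #S * #S ≤ 2 * ∑ s ∈ S, s := by
  induction S using Finset.induction_on_max with
  | empty => simp
  | insert a S hlt ih =>
    have ha : a ∉ S := fun h => (hlt a h).false
    have hS' : 0 ∉ S := fun h => hS (mem_insert_of_mem h)
    have hcard : #S + 1 ≤ a := by
      have : S ⊆ Ioo 0 a := fun x hx =>
        mem_Ioo.2 ⟨Nat.pos_of_ne_zero (by rintro rfl; exact hS' hx), hlt x hx⟩
      have ha0 : a ≠ 0 := by rintro rfl; exact hS (mem_insert_self 0 S)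
      have := card_le_card this
      rw [Nat.card_Ioo] at this
      omega
    rw [card_insert_of_notMem ha, sum_insert ha]
    nlinarith [ih hS']

lemma mul_card_mul_card_le_two_mul_sum {d : ℕ} {S : Finset ℕ} (hS : 0 ∉ S)
    (hdvd : ∀ s ∈ S, d ∣ s) :
    d * (#S * #S) ≤ 2 * ∑ s ∈ S, s := by
  have hinj : Set.InjOn (· / d) S := fun x hx y hy hxy => by
    rw [← Nat.div_mul_cancel (hdvd x hx), ← Nat.div_mul_cancel (hdvd y hy)]
    exact congrArg (· * d) hxy
  have h0 : 0 ∉ S.image (· / d) := by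
    simp only [mem_image, not_exists, not_and]
    intro s hs hs0
    exact hS (Nat.eq_zero_of_dvd_of_div_eq_zero (hdvd s hs) hs0 ▸ hs)
  have key := card_mul_card_le_two_mul_sum h0
  rw [card_image_of_injOn hinj, sum_image hinj] at key
  calc d * (#S * #S) ≤ d * (2 * ∑ s ∈ S, s / d) := Nat.mul_le_mul_left d key
    _ = 2 * ∑ s ∈ S, s := by
      rw [mul_left_comm, mul_sum]
      exact congrArg _ (sum_congr rfl fun s hs => Nat.mul_div_cancel' (hdvd s hs))

lemma Nat.sum_divisors_eq_sum_ite_dvd {M : Type*} [AddCommMonoid M] {n : ℕ} (hn : n ≠ 0)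
    {D : Finset ℕ} (hD : n.divisors ⊆ D) (f : ℕ → M) :
    ∑ d ∈ n.divisors, f d = ∑ d ∈ D, if d ∣ n then f d else 0 := by
  rw [← sum_filter]
  congr 1
  ext d
  simp only [mem_filter, Nat.mem_divisors, hn, ne_eq, not_false_eq_true, and_true]
  exact ⟨fun hd => ⟨hD (Nat.mem_divisors.2 ⟨hd, hn⟩), hd⟩, And.right⟩

lemma sum_sum_ite_dvd_and_dvd {M : Type*} [AddCommMonoid M] (A : Finset ℕ) (d : ℕ) (x : M) :
    ∑ a ∈ A, ∑ b ∈ A, (if d ∣ a ∧ d ∣ b then x else 0) =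
      (#{a ∈ A | d ∣ a} * #{a ∈ A | d ∣ a}) • x := by
  simp [ite_and, ← sum_filter, mul_smul]

theorem sum_sum_gcd_le_two_mul_sum_mul_card_divisors {A : Finset ℕ} (hA : 0 ∉ A) :
    ∑ a ∈ A, ∑ b ∈ A, a.gcd b ≤ 2 * ∑ a ∈ A, a * #a.divisors := by
  set D := A.biUnion Nat.divisors
  have hD {a : ℕ} (ha : a ∈ A) : a.divisors ⊆ D := subset_biUnion_of_mem _ ha
  have ha0 {a : ℕ} (ha : a ∈ A) : a ≠ 0 := by rintro rfl; exact hA ha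
  have gcd_eq {a : ℕ} (ha : a ∈ A) (b : ℕ) :
      a.gcd b = ∑ d ∈ D, if d ∣ a ∧ d ∣ b then d.totient else 0 := by
    have hg : a.gcd b ≠ 0 := Nat.gcd_ne_zero_left (ha0 ha)
    rw [← Nat.sum_totient (a.gcd b), Nat.sum_divisors_eq_sum_ite_dvd hg
      ((Nat.divisors_subset_of_dvd (ha0 ha) (Nat.gcd_dvd_left a b)).trans (hD ha))]
    simp only [Nat.dvd_gcd_iff]
  calc ∑ a ∈ A, ∑ b ∈ A, a.gcd b
      = ∑ d ∈ D, (#{a ∈ A | d ∣ a} * #{a ∈ A | d ∣ a}) * d.totient := by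
        rw [sum_congr rfl fun a ha => sum_congr rfl fun b _ => gcd_eq ha b]
        simp_rw [sum_comm (s := A) (t := D), sum_sum_ite_dvd_and_dvd, smul_eq_mul]
    _ ≤ ∑ d ∈ D, (#{a ∈ A | d ∣ a} * #{a ∈ A | d ∣ a}) * d := by
        gcongr with d; exact Nat.totient_le d
    _ ≤ ∑ d ∈ D, 2 * ∑ a ∈ A with d ∣ a, a :=
        sum_le_sum fun d _ => (mul_comm _ _).trans_le <| mul_card_mul_card_le_two_mul_sum
          (fun h => hA (mem_filter.1 h).1) fun a ha => (mem_filter.1 ha).2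
    _ = 2 * ∑ a ∈ A, a * #a.divisors := by
        simp_rw [← mul_sum, sum_filter]
        rw [sum_comm]
        refine congrArg _ (sum_congr rfl fun a ha => ?_)
        rw [← Nat.sum_divisors_eq_sum_ite_dvd (ha0 ha) (hD ha) fun _ => a, sum_const, smul_eq_mul,
          mul_comm]

lemma sum_sum_gcd_le_two_mul_mul_sum {A : Finset ℕ} (hA : 0 ∉ A) {T : ℝ}
    (hT : ∀ a ∈ A, (#a.divisors : ℝ) ≤ T) :
    ((∑ a ∈ A, ∑ b ∈ A, a.gcd b : ℕ) : ℝ) ≤ 2 * T * ∑ a ∈ A, (a : ℝ) := by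
  calc ((∑ a ∈ A, ∑ b ∈ A, a.gcd b : ℕ) : ℝ) ≤ 2 * ∑ a ∈ A, (a : ℝ) * #a.divisors := by
        exact_mod_cast sum_sum_gcd_le_two_mul_sum_mul_card_divisors hA
    _ ≤ 2 * ∑ a ∈ A, (a : ℝ) * T := by gcongr with a ha; exact hT a ha
    _ = 2 * T * ∑ a ∈ A, (a : ℝ) := by rw [← sum_mul]; ring

/-- For every real `ε > 0` there exists `N₀ ∈ ℕ` such that for every
finite set `A` of positive integers whose sum `N = ∑_{a ∈ A} a` satisfies `N ≥ N₀`, one has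
`∑_{(a,b) ∈ A×A} gcd(a,b) ≤ N^{1+ε}`; i.e. `∑_{a,b ∈ A} gcd(a,b) ≤ N^{1+o(1)}`. -/
theorem sum_sum_gcd_le_rpow (ε : ℝ) (hε : 0 < ε) :
    ∃ N₀ : ℕ, ∀ A : Finset ℕ, (∀ a ∈ A, 0 < a) → N₀ ≤ ∑ a ∈ A, a →
      ((∑ a ∈ A, ∑ b ∈ A, Nat.gcd a b : ℕ) : ℝ) ≤ ((∑ a ∈ A, a : ℕ) : ℝ) ^ (1 + ε) := by
  have hδ : 0 < ε / 2 := half_pos hε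
  obtain ⟨C, hC0, hC⟩ := Nat.card_divisors_le_mul_rpow hδ
  obtain ⟨N₀, hN₀⟩ := Filter.eventually_atTop.1 <|
    ((tendsto_rpow_atTop hδ).comp tendsto_natCast_atTop_atTop).eventually_ge_atTop (2 * C)
  refine ⟨max N₀ 1, fun A hA hN => ?_⟩
  set N := ∑ a ∈ A, a
  have hN0 : (0 : ℝ) < N := by exact_mod_cast (le_max_right N₀ 1).trans hN
  have hτ (a : ℕ) (ha : a ∈ A) : (#a.divisors : ℝ) ≤ C * (N : ℝ) ^ (ε / 2) :=
    (hC a (hA a ha).ne').trans <| by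
      gcongr; exact_mod_cast single_le_sum (f := id) (fun _ _ => Nat.zero_le _) ha
  calc ((∑ a ∈ A, ∑ b ∈ A, a.gcd b : ℕ) : ℝ) ≤ 2 * C * (N : ℝ) ^ (ε / 2) * N := by
        simpa [N, mul_assoc] using sum_sum_gcd_le_two_mul_mul_sum (fun h => (hA 0 h).false) hτ
    _ ≤ (N : ℝ) ^ (ε / 2) * (N : ℝ) ^ (ε / 2) * N := by
        gcongr; exact hN₀ N (le_of_max_le_left hN)
    _ = (N : ℝ) ^ (1 + ε) := by
        rw [← Real.rpow_add hN0, add_halves, mul_comm, ← Real.rpow_one_add' hN0.le (by positivity)]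
end

section
/- Let G = (V, E) be a directed graph with edge weights ω : E → ℤ and distinguished vertices s, t ∈ V such that every vertex of G lies on some walk from s to t. Then the following are equivalent: (1) there exist vertices p, q ∈ V, an integer ℓ₀ ≥ 0, walks of length ℓ₀ from s to p and from s to q, an integer ℓ > 0, and cycles of length ℓ at p and at q whose total weights differ; (2) G contains two cycles of different average weight. -/
/-- A walk from `u` to `v` in a directed graph with edge set `E`, represented by its
(nonempty) list of visited vertices: it starts at `u`, ends at `v`, and consecutive
vertices are joined by edges. Its length is `l.length - 1`; a cycle at `v` is a walk of
positive length from `v` to `v`. -/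
def IsWalk {V : Type*} (E : Set (V × V)) (u v : V) (l : List V) : Prop :=
  l.head? = some u ∧ l.getLast? = some v ∧ l.Chain' (fun a b => (a, b) ∈ E)

/-- The total weight of a walk: the sum of the weights of its consecutive edge pairs,
counted with multiplicity. -/
def walkWeight {V W : Type*} [AddCommMonoid W] (ω : V × V → W) (l : List V) : W :=
  ((l.zip l.tail).map ω).sum

/-!
A cycle of length `ℓ` and weight `w` at `v` can be rotated one step forward along its first
edge, so once it is reachable from `s` by a walk of length `n` it is reachable, with a
rotated copy of it, by walks of every length `m ≥ n`; hence two cycles can be brought to the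
same distance from `s`. Going round them `ℓ₂` and `ℓ₁` times respectively gives two cycles
of the common length `ℓ₁ℓ₂`, with weights `ℓ₂w₁` and `ℓ₁w₂`, and these differ exactly when
the average weights `w₁/ℓ₁` and `w₂/ℓ₂` do.
-/

section Walks

variable {V W : Type*} [AddCommMonoid W] {E : Set (V × V)} {ω : V × V → W}

@[simp]
theorem walkWeight_singleton (a : V) : walkWeight ω [a] = 0 := by
  simp [walkWeight]

@[simp]
theorem walkWeight_cons_cons (a b : V) (l : List V) :
    walkWeight ω (a :: b :: l) = ω (a, b) + walkWeight ω (b :: l) := by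
  simp [walkWeight]

theorem walkWeight_append_cons (l r : List V) (v : V) :
    walkWeight ω (l ++ v :: r) = walkWeight ω (l ++ [v]) + walkWeight ω (v :: r) := by
  induction l with
  | nil => simp
  | cons a l ih =>
    cases l with
    | nil => simp
    | cons b l =>
      simp only [List.cons_append, walkWeight_cons_cons] at ih ⊢
      rw [ih, add_assoc]

theorem walkWeight_append_tail {l₁ l₂ : List V} {v : V} (h₁ : l₁.getLast? = some v)
    (h₂ : l₂.head? = some v) :
    walkWeight ω (l₁ ++ l₂.tail) = walkWeight ω l₁ + walkWeight ω l₂ := by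
  obtain ⟨l, rfl⟩ := List.getLast?_eq_some_iff.mp h₁
  obtain ⟨r, rfl⟩ := List.head?_eq_some_iff.mp h₂
  rw [List.tail_cons, List.append_assoc, List.singleton_append, walkWeight_append_cons]

theorem IsWalk.ne_nil {u v : V} {l : List V} (h : IsWalk E u v l) : l ≠ [] := by
  rintro rfl
  simp [IsWalk] at h

theorem IsWalk.append {u v w : V} {l₁ l₂ : List V} (h₁ : IsWalk E u v l₁)
    (h₂ : IsWalk E v w l₂) : IsWalk E u w (l₁ ++ l₂.tail) := by
  obtain ⟨hu, hv, hc₁⟩ := h₁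
  obtain ⟨hv', hw, hc₂⟩ := h₂
  obtain ⟨l, rfl⟩ := List.getLast?_eq_some_iff.mp hv
  obtain ⟨r, rfl⟩ := List.head?_eq_some_iff.mp hv'
  rw [List.tail_cons, List.append_assoc, List.singleton_append]
  refine ⟨?_, ?_, List.isChain_split.mpr ⟨hc₁, hc₂⟩⟩
  · cases l <;> simpa using hu
  · simpa [List.getLast?_append] using hw

theorem IsWalk.exists_isWalk_of_mem {u v w : V} {l : List V} (h : IsWalk E u w l)
    (hv : v ∈ l) : ∃ l', IsWalk E u v l' := by
  obtain ⟨l₁, l₂, rfl⟩ := List.append_of_mem hv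
  refine ⟨l₁ ++ [v], ?_, List.getLast?_concat, h.2.2.prefix ⟨l₂, by simp⟩⟩
  cases l₁ <;> simpa using h.1

def HasClosedWalk (E : Set (V × V)) (ω : V × V → W) (v : V) (ℓ : ℕ) (w : W) : Prop :=
  ∃ c, IsWalk E v v c ∧ c.length = ℓ + 1 ∧ walkWeight ω c = w

theorem hasClosedWalk_zero (v : V) : HasClosedWalk E ω v 0 0 :=
  ⟨[v], ⟨rfl, rfl, List.isChain_singleton v⟩, rfl, walkWeight_singleton v⟩

theorem HasClosedWalk.add {v : V} {ℓ₁ ℓ₂ : ℕ} {w₁ w₂ : W} (h₁ : HasClosedWalk E ω v ℓ₁ w₁)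
    (h₂ : HasClosedWalk E ω v ℓ₂ w₂) : HasClosedWalk E ω v (ℓ₁ + ℓ₂) (w₁ + w₂) := by
  obtain ⟨c₁, hc₁, hlen₁, rfl⟩ := h₁
  obtain ⟨c₂, hc₂, hlen₂, rfl⟩ := h₂
  refine ⟨c₁ ++ c₂.tail, hc₁.append hc₂, ?_, walkWeight_append_tail hc₁.2.1 hc₂.1⟩
  simp only [List.length_append, List.length_tail]
  omega

theorem HasClosedWalk.nsmul {v : V} {ℓ : ℕ} {w : W} (h : HasClosedWalk E ω v ℓ w) (k : ℕ) :
    HasClosedWalk E ω v (k * ℓ) (k • w) := by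
  induction k with
  | zero => simpa using hasClosedWalk_zero v
  | succ k ih => simpa [Nat.succ_mul, succ_nsmul] using ih.add h

theorem HasClosedWalk.exists_rotate {v : V} {ℓ : ℕ} {w : W} (h : HasClosedWalk E ω v ℓ w)
    (hℓ : 0 < ℓ) : ∃ v', (v, v') ∈ E ∧ HasClosedWalk E ω v' ℓ w := by
  obtain ⟨c, ⟨hhead, hlast, hchain⟩, hlen, rfl⟩ := h
  obtain ⟨r, rfl⟩ := List.head?_eq_some_iff.mp hhead
  obtain ⟨b, r, rfl⟩ := List.exists_cons_of_length_pos (l := r) (by simp at hlen; omega)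
  obtain ⟨hvb, hchain⟩ := List.isChain_cons_cons.mp hchain
  have hedge : IsWalk E v b [v, b] := ⟨rfl, rfl, List.isChain_pair.mpr hvb⟩
  have hrest : IsWalk E b v (b :: r) := ⟨rfl, by simpa using hlast, hchain⟩
  refine ⟨b, hvb, (b :: r) ++ [v, b].tail, hrest.append hedge, by simpa using hlen, ?_⟩
  rw [walkWeight_append_tail hrest.2.1 rfl, walkWeight_cons_cons, walkWeight_cons_cons,
    walkWeight_singleton, add_zero, add_comm]

theorem exists_walk_hasClosedWalk_of_length_le {s v : V} {l : List V} {ℓ : ℕ} {w : W}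
    (hl : IsWalk E s v l) (hc : HasClosedWalk E ω v ℓ w) (hℓ : 0 < ℓ) {m : ℕ}
    (hm : l.length ≤ m + 1) :
    ∃ p l', IsWalk E s p l' ∧ l'.length = m + 1 ∧ HasClosedWalk E ω p ℓ w := by
  induction m with
  | zero => exact ⟨v, l, hl, by have := List.length_pos_iff.mpr hl.ne_nil; omega, hc⟩
  | succ m ih =>
    rcases hm.eq_or_lt with heq | hlt
    · exact ⟨v, l, hl, heq, hc⟩
    obtain ⟨p, l', hl', hlen, hp⟩ := ih (by omega)
    obtain ⟨p', hpp', hp'⟩ := hp.exists_rotate hℓ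
    have hedge : IsWalk E p p' [p, p'] := ⟨rfl, rfl, List.isChain_pair.mpr hpp'⟩
    exact ⟨p', l' ++ [p, p'].tail, hl'.append hedge, by simp [hlen], hp'⟩

theorem exists_siblings_of_hasClosedWalk {s v₁ v₂ : V} {l₁ l₂ : List V} {ℓ₁ ℓ₂ : ℕ}
    {w₁ w₂ : W} (hl₁ : IsWalk E s v₁ l₁) (hl₂ : IsWalk E s v₂ l₂)
    (hc₁ : HasClosedWalk E ω v₁ ℓ₁ w₁) (hc₂ : HasClosedWalk E ω v₂ ℓ₂ w₂)
    (hℓ₁ : 0 < ℓ₁) (hℓ₂ : 0 < ℓ₂) :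
    ∃ (p q : V) (ℓ₀ : ℕ) (wp wq : List V),
      IsWalk E s p wp ∧ wp.length = ℓ₀ + 1 ∧ IsWalk E s q wq ∧ wq.length = ℓ₀ + 1 ∧
      HasClosedWalk E ω p (ℓ₂ * ℓ₁) (ℓ₂ • w₁) ∧ HasClosedWalk E ω q (ℓ₂ * ℓ₁) (ℓ₁ • w₂) := by
  obtain ⟨p, wp, hwp, hwpl, hp⟩ := exists_walk_hasClosedWalk_of_length_le hl₁ hc₁ hℓ₁
    (m := l₁.length + l₂.length) (by omega)
  obtain ⟨q, wq, hwq, hwql, hq⟩ := exists_walk_hasClosedWalk_of_length_le hl₂ hc₂ hℓ₂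
    (m := l₁.length + l₂.length) (by omega)
  exact ⟨p, q, _, wp, wq, hwp, hwpl, hwq, hwql, hp.nsmul ℓ₂, mul_comm ℓ₁ ℓ₂ ▸ hq.nsmul ℓ₁⟩

end Walks

theorem cast_div_length_sub_one {α : Type*} {c : List α} {ℓ : ℕ} (h : c.length = ℓ + 1)
    (x : ℚ) : x / ((c.length : ℚ) - 1) = x / ℓ := by
  rw [h]
  push_cast
  ring

theorem nsmul_ne_nsmul_of_div_ne_div {w₁ w₂ : ℤ} {ℓ₁ ℓ₂ : ℕ} (h₁ : ℓ₁ ≠ 0) (h₂ : ℓ₂ ≠ 0)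
    (h : (w₁ : ℚ) / ℓ₁ ≠ w₂ / ℓ₂) : ℓ₂ • w₁ ≠ ℓ₁ • w₂ := by
  rw [Ne, div_eq_div_iff (by exact_mod_cast h₁) (by exact_mod_cast h₂)] at h
  rw [nsmul_eq_mul, nsmul_eq_mul]
  contrapose! h
  rw [mul_comm, mul_comm (w₂ : ℚ)]
  exact_mod_cast h

theorem non_twin_siblings_iff_two_cycles_diff_avg_general {V : Type*}
    (E : Set (V × V)) (ω : V × V → ℤ) (s t : V)
    (htrim : ∀ v : V, ∃ l : List V, IsWalk E s t l ∧ v ∈ l) :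
    (∃ (p q : V) (ℓ₀ : ℕ) (wp wq : List V) (ℓ : ℕ) (cp cq : List V),
        IsWalk E s p wp ∧ wp.length = ℓ₀ + 1 ∧
        IsWalk E s q wq ∧ wq.length = ℓ₀ + 1 ∧
        0 < ℓ ∧
        IsWalk E p p cp ∧ cp.length = ℓ + 1 ∧
        IsWalk E q q cq ∧ cq.length = ℓ + 1 ∧
        walkWeight ω cp ≠ walkWeight ω cq) ↔
      (∃ (v₁ : V) (c₁ : List V) (v₂ : V) (c₂ : List V),
        IsWalk E v₁ v₁ c₁ ∧ 2 ≤ c₁.length ∧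
        IsWalk E v₂ v₂ c₂ ∧ 2 ≤ c₂.length ∧
        ((walkWeight ω c₁ : ℤ) : ℚ) / ((c₁.length : ℚ) - 1) ≠
          ((walkWeight ω c₂ : ℤ) : ℚ) / ((c₂.length : ℚ) - 1)) := by
  constructor
  · rintro ⟨p, q, -, -, -, ℓ, cp, cq, -, -, -, -, hℓ, hcp, hcpl, hcq, hcql, hne⟩
    refine ⟨p, cp, q, cq, hcp, by omega, hcq, by omega, ?_⟩
    rw [cast_div_length_sub_one hcpl, cast_div_length_sub_one hcql, Ne,
      div_left_inj' (by exact_mod_cast hℓ.ne'), Int.cast_inj]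
    exact hne
  · rintro ⟨v₁, c₁, v₂, c₂, hc₁, hlen₁, hc₂, hlen₂, hne⟩
    obtain ⟨ℓ₁, hℓ₁⟩ : ∃ ℓ, c₁.length = ℓ + 1 := ⟨c₁.length - 1, by omega⟩
    obtain ⟨ℓ₂, hℓ₂⟩ : ∃ ℓ, c₂.length = ℓ + 1 := ⟨c₂.length - 1, by omega⟩
    rw [cast_div_length_sub_one hℓ₁, cast_div_length_sub_one hℓ₂] at hne
    have reach (v : V) : ∃ l, IsWalk E s v l :=
      (htrim v).elim fun _ h => h.1.exists_isWalk_of_mem h.2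
    obtain ⟨l₁, hl₁⟩ := reach v₁
    obtain ⟨l₂, hl₂⟩ := reach v₂
    obtain ⟨p, q, ℓ₀, wp, wq, hwp, hwpl, hwq, hwql, ⟨cp, hcp, hcpl, hcpw⟩, ⟨cq, hcq, hcql, hcqw⟩⟩ :=
      exists_siblings_of_hasClosedWalk (ω := ω) hl₁ hl₂ ⟨c₁, hc₁, hℓ₁, rfl⟩ ⟨c₂, hc₂, hℓ₂, rfl⟩
        (by omega) (by omega)
    refine ⟨p, q, ℓ₀, wp, wq, ℓ₂ * ℓ₁, cp, cq, hwp, hwpl, hwq, hwql,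
      Nat.mul_pos (by omega) (by omega), hcp, hcpl, hcq, hcql, ?_⟩
    rw [hcpw, hcqw]
    exact nsmul_ne_nsmul_of_div_ne_div (by omega) (by omega) hne

/-- Let `G = (V, E)` have integer edge weights `ω` and distinguished
vertices `s, t` such that every vertex lies on some walk from `s` to `t`. Then the
following are equivalent: (1) there exist vertices `p, q`, an `ℓ₀ ≥ 0`, walks of length
`ℓ₀` from `s` to `p` and from `s` to `q`, an `ℓ > 0`, and cycles of length `ℓ` at `p` and
at `q` whose total weights differ (a pair of non-twin siblings); (2) `G` contains two
cycles of different average weight. -/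
theorem non_twin_siblings_iff_two_cycles_diff_avg {V : Type*} [Fintype V]
    (E : Set (V × V)) (ω : V × V → ℤ) (s t : V)
    (htrim : ∀ v : V, ∃ l : List V, IsWalk E s t l ∧ v ∈ l) :
    (∃ (p q : V) (ℓ₀ : ℕ) (wp wq : List V) (ℓ : ℕ) (cp cq : List V),
        IsWalk E s p wp ∧ wp.length = ℓ₀ + 1 ∧
        IsWalk E s q wq ∧ wq.length = ℓ₀ + 1 ∧
        0 < ℓ ∧
        IsWalk E p p cp ∧ cp.length = ℓ + 1 ∧
        IsWalk E q q cq ∧ cq.length = ℓ + 1 ∧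
        walkWeight ω cp ≠ walkWeight ω cq) ↔
      (∃ (v₁ : V) (c₁ : List V) (v₂ : V) (c₂ : List V),
        IsWalk E v₁ v₁ c₁ ∧ 2 ≤ c₁.length ∧
        IsWalk E v₂ v₂ c₂ ∧ 2 ≤ c₂.length ∧
        ((walkWeight ω c₁ : ℤ) : ℚ) / ((c₁.length : ℚ) - 1) ≠
          ((walkWeight ω c₂ : ℤ) : ℚ) / ((c₂.length : ℚ) - 1)) :=
  non_twin_siblings_iff_two_cycles_diff_avg_general E ω s t htrim
end

section
/- Let G = (V, E) be a directed graph and let v, w ∈ V be vertices such that there is a cycle through v, a cycle through w, a walk from v to w, and no walk from w to v (so v and w lie in different strongly connected components). Then there exist vertices p ≠ q, an integer ℓ > 0, a cycle of length ℓ at p, a walk of length ℓ from p to q, and a cycle of length ℓ at q; that is, G has the IDA property. -/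
/-!
Let `a, b > 0` be the lengths of the cycles at `v` and `w`, `m` that of the walk
from `v` to `w`, and `ℓ = a b (m + 1)`. Going around the cycle at `v` and at `w` `ℓ / a`,
resp. `ℓ / b`, times gives cycles of length `ℓ` at both. Let `q` be the vertex reached after
`ℓ - m` steps on the `ℓ`-cycle at `w`: following the walk `v → w` and then these `ℓ - m`
steps is a walk of length `ℓ` from `v` to `q`, and the rest of the `ℓ`-cycle, back to `w`
in `m` steps, followed by the same `ℓ - m` steps is a cycle of length `ℓ` at `q`. Finally
`q ≠ v`, since `q` is reachable from `w` and `v` is not.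
-/

section Walks

variable {V : Type*} {E : Set (V × V)}

inductive WalkOfLength (E : Set (V × V)) : ℕ → V → V → Prop
  | refl (u : V) : WalkOfLength E 0 u u
  | cons {n : ℕ} {u v w : V} : (u, v) ∈ E → WalkOfLength E n v w → WalkOfLength E (n + 1) u w

namespace WalkOfLength

theorem trans {m n : ℕ} {u v w : V} (h₁ : WalkOfLength E m u v) (h₂ : WalkOfLength E n v w) :
    WalkOfLength E (n + m) u w := by
  induction h₁ with
  | refl => exact h₂
  | cons huv _ ih => exact cons huv (ih h₂)

theorem split {m n : ℕ} {u w : V} (h : WalkOfLength E (m + n) u w) :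
    ∃ v, WalkOfLength E m u v ∧ WalkOfLength E n v w := by
  induction m generalizing u with
  | zero => exact ⟨u, refl u, by simpa using h⟩
  | succ m ih =>
    rw [Nat.add_right_comm] at h
    obtain _ | ⟨huv, hvw⟩ := h
    obtain ⟨x, hvx, hxw⟩ := ih hvw
    exact ⟨x, cons huv hvx, hxw⟩

theorem cycle_of_dvd {a n : ℕ} {u : V} (h : WalkOfLength E a u u) (hn : a ∣ n) :
    WalkOfLength E n u u := by
  obtain ⟨k, rfl⟩ := hn
  induction k with
  | zero => exact refl u
  | succ k ih => exact h.trans ih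

theorem exists_isWalk {n : ℕ} {u v : V} (h : WalkOfLength E n u v) :
    ∃ l, IsWalk E u v l ∧ l.length = n + 1 := by
  induction h with
  | refl u => exact ⟨[u], ⟨rfl, rfl, List.isChain_singleton u⟩, rfl⟩
  | cons huv _ ih =>
    obtain ⟨l, ⟨hhead, hlast, hchain⟩, hlen⟩ := ih
    obtain _ | ⟨x, l⟩ := l
    · simp at hhead
    · obtain rfl : x = _ := by simpa using hhead
      refine ⟨_ :: x :: l, ⟨rfl, ?_, ?_⟩, by simp [hlen]⟩
      · simpa [List.getLast?_cons_cons] using hlast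
      · exact List.IsChain.cons_cons huv hchain

theorem exists_target_on_cycle {ℓ m : ℕ} {v w : V} (hw : WalkOfLength E ℓ w w)
    (hvw : WalkOfLength E m v w) (hm : m ≤ ℓ) :
    ∃ q, WalkOfLength E (ℓ - m) w q ∧ WalkOfLength E ℓ v q ∧ WalkOfLength E ℓ q q := by
  rw [← Nat.sub_add_cancel hm] at hw
  obtain ⟨q, hwq, hqw⟩ := hw.split
  refine ⟨q, hwq, ?_, ?_⟩
  · simpa [Nat.sub_add_cancel hm] using hvw.trans hwq
  · simpa [Nat.sub_add_cancel hm] using hqw.trans hwq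

end WalkOfLength

theorem IsWalk.walkOfLength {u v : V} {l : List V} (h : IsWalk E u v l) :
    WalkOfLength E (l.length - 1) u v := by
  induction l generalizing u with
  | nil => simp [IsWalk] at h
  | cons x l ih =>
    obtain ⟨hhead, hlast, hchain⟩ := h
    obtain rfl : x = u := by simpa using hhead
    obtain _ | ⟨y, l⟩ := l
    · obtain rfl : x = v := by simpa using hlast
      exact .refl x
    · replace hchain := List.isChain_cons_cons.mp hchain
      exact .cons hchain.1 (ih ⟨rfl, by simpa [List.getLast?_cons_cons] using hlast, hchain.2⟩)

end Walks

theorem ida_of_walk_between_components_general {V : Type*} (E : Set (V × V)) (v w : V)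
    (hcv : ∃ c : List V, IsWalk E v v c ∧ 2 ≤ c.length)
    (hcw : ∃ c : List V, IsWalk E w w c ∧ 2 ≤ c.length)
    (hvw : ∃ l : List V, IsWalk E v w l)
    (hwv : ¬ ∃ l : List V, IsWalk E w v l) :
    ∃ (p q : V) (ℓ : ℕ), p ≠ q ∧ 0 < ℓ ∧
      (∃ c : List V, IsWalk E p p c ∧ c.length = ℓ + 1) ∧
      (∃ l : List V, IsWalk E p q l ∧ l.length = ℓ + 1) ∧
      (∃ c : List V, IsWalk E q q c ∧ c.length = ℓ + 1) := by
  obtain ⟨cv, hcv, hcv_len⟩ := hcv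
  obtain ⟨cw, hcw, hcw_len⟩ := hcw
  obtain ⟨l, hl⟩ := hvw
  set a := cv.length - 1
  set b := cw.length - 1
  set m := l.length - 1
  set ℓ := a * b * (m + 1)
  have ha : 0 < a := by omega
  have hb : 0 < b := by omega
  have hℓ : 0 < ℓ := by positivity
  have hmℓ : m ≤ ℓ := (Nat.le_succ m).trans (Nat.le_mul_of_pos_left _ (by positivity))
  obtain ⟨q, hwq, hvq, hqq⟩ :=
    (hcw.walkOfLength.cycle_of_dvd (dvd_mul_of_dvd_left (dvd_mul_left b a) _)).exists_target_on_cycle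
      hl.walkOfLength hmℓ
  refine ⟨v, q, ℓ, ?_, hℓ, (hcv.walkOfLength.cycle_of_dvd ?_).exists_isWalk, hvq.exists_isWalk,
    hqq.exists_isWalk⟩
  · rintro rfl
    exact hwv (hwq.exists_isWalk.imp fun _ => And.left)
  · exact dvd_mul_of_dvd_left (dvd_mul_right a b) _

/-- Let `G = (V, E)` be a directed graph and `v, w` vertices such that
there is a cycle through `v`, a cycle through `w`, a walk from `v` to `w`, and no walk from
`w` to `v`. Then `G` has the IDA property: there are vertices `p ≠ q`, an `ℓ > 0`, a cycle
of length `ℓ` at `p`, a walk of length `ℓ` from `p` to `q`, and a cycle of length `ℓ`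
at `q`. -/
theorem ida_of_walk_between_components {V : Type*} [Fintype V] (E : Set (V × V)) (v w : V)
    (hcv : ∃ c : List V, IsWalk E v v c ∧ 2 ≤ c.length)
    (hcw : ∃ c : List V, IsWalk E w w c ∧ 2 ≤ c.length)
    (hvw : ∃ l : List V, IsWalk E v w l)
    (hwv : ¬ ∃ l : List V, IsWalk E w v l) :
    ∃ (p q : V) (ℓ : ℕ), p ≠ q ∧ 0 < ℓ ∧
      (∃ c : List V, IsWalk E p p c ∧ c.length = ℓ + 1) ∧
      (∃ l : List V, IsWalk E p q l ∧ l.length = ℓ + 1) ∧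
      (∃ c : List V, IsWalk E q q c ∧ c.length = ℓ + 1) :=
  ida_of_walk_between_components_general E v w hcv hcw hvw hwv
end

section
/- Let A = (Q, Σ, δ, {q_I}, {q_F}) be an NFA with a unique initial state q_I and a unique accepting state q_F which is trim, i.e., every state of A lies on some accepting run (equivalently, every state is reachable from q_I by some run and admits a run to q_F). Let # be a symbol not in Σ and let A' = (Q, Σ ∪ {#}, δ ∪ {(q_F, #, q_I)}, {q_I}, {q_F}). Then A' has the EDA property if and only if A is not unambiguous. -/
/-- `IsRun δ w p q r` says that the list of states `r = [p₀, …, p_n]` is a run of the NFA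
with transition relation `δ` on the word `w = [w₁, …, w_n]` from `p = p₀` to `q = p_n`:
it has length `n + 1` and `(p_{i-1}, w_i, p_i) ∈ δ` for all `i`. -/
def IsRun {Q A : Type*} (δ : Set (Q × A × Q)) (w : List A) (p q : Q) (r : List Q) : Prop :=
  r.length = w.length + 1 ∧ r.head? = some p ∧ r.getLast? = some q ∧
    ∀ tr ∈ r.zip (w.zip r.tail), tr ∈ δ

/-!
Two accepting runs of `A` on `w` give two cycles of `A'` at `qI` on `w#`. Conversely, two
distinct runs of `A'` on the same word first diverge on a letter of `A`, because the only
`#`-edge is deterministic. Following both runs up to the next `#` (or to the end) gives two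
distinct runs of `A` on one word between the same two states, and trimness extends them to two
distinct accepting runs.
-/

section Runs

variable {Q A : Type*} {δ : Set (Q × A × Q)}

lemma isRun_nil_iff {p q : Q} {r : List Q} : IsRun δ [] p q r ↔ p = q ∧ r = [p] := by
  constructor
  · rintro ⟨hl, hh, hlast, -⟩
    obtain ⟨x, rfl⟩ := List.length_eq_one_iff.mp (by simpa using hl)
    simp only [List.head?_cons, List.getLast?_singleton, Option.some.injEq] at hh hlast
    exact ⟨hh.symm.trans hlast, hh ▸ rfl⟩
  · rintro ⟨rfl, rfl⟩
    exact ⟨rfl, rfl, rfl, by simp⟩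

lemma isRun_cons_iff {a : A} {w : List A} {p q : Q} {r : List Q} :
    IsRun δ (a :: w) p q r ↔
      ∃ p' r', r = p :: p' :: r' ∧ (p, a, p') ∈ δ ∧ IsRun δ w p' q (p' :: r') := by
  constructor
  · rintro ⟨hl, hh, hlast, hz⟩
    match r, hl with
    | x :: y :: r', hl =>
      simp only [List.head?_cons, Option.some.injEq] at hh
      subst hh
      rw [List.getLast?_cons_cons] at hlast
      simp only [List.tail_cons, List.zip_cons_cons, List.mem_cons, forall_eq_or_imp] at hz
      exact ⟨y, r', rfl, hz.1, by simpa using hl, rfl, hlast,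
        fun tr htr => hz.2 tr (by simpa using htr)⟩
  · rintro ⟨p', r', rfl, hmem, hl, -, hlast, hz⟩
    refine ⟨by simpa using hl, rfl, by rwa [List.getLast?_cons_cons], ?_⟩
    simp only [List.tail_cons, List.zip_cons_cons, List.mem_cons, forall_eq_or_imp]
    exact ⟨hmem, fun tr htr => hz tr (by simpa using htr)⟩

lemma IsRun.eq_cons_tail {w : List A} {p q : Q} {r : List Q} (h : IsRun δ w p q r) :
    r = p :: r.tail := by
  obtain ⟨-, hh, -, -⟩ := h
  cases r with
  | nil => simp at hh
  | cons x t => simp_all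

lemma IsRun.cons {a : A} {w : List A} {p p' q : Q} {r : List Q} (hmem : (p, a, p') ∈ δ)
    (h : IsRun δ w p' q r) : IsRun δ (a :: w) p q (p :: r) :=
  isRun_cons_iff.mpr ⟨p', r.tail, by rw [← h.eq_cons_tail], hmem, h.eq_cons_tail ▸ h⟩

lemma IsRun.append {u v : List A} {p q s : Q} {r r' : List Q}
    (h : IsRun δ u p q r) (h' : IsRun δ v q s r') :
    IsRun δ (u ++ v) p s (r ++ r'.tail) := by
  induction u generalizing p r with
  | nil =>
    obtain ⟨rfl, rfl⟩ := isRun_nil_iff.mp h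
    simpa [← h'.eq_cons_tail] using h'
  | cons a u ih =>
    obtain ⟨p', r'', rfl, hmem, hrun⟩ := isRun_cons_iff.mp h
    exact (ih hrun).cons hmem

end Runs

def HasDistinctRuns {Q A : Type*} (δ : Set (Q × A × Q)) : Prop :=
  ∃ (w : List A) (x y : Q) (ρ₁ ρ₂ : List Q), IsRun δ w x y ρ₁ ∧ IsRun δ w x y ρ₂ ∧ ρ₁ ≠ ρ₂

lemma HasDistinctRuns.exists_ne_accepting_runs {Q A : Type*} {δ : Set (Q × A × Q)} {qI qF : Q}
    (h : HasDistinctRuns δ)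
    (htrim : ∀ p : Q, (∃ (u : List A) (r : List Q), IsRun δ u qI p r) ∧
                      (∃ (v : List A) (r : List Q), IsRun δ v p qF r)) :
    ∃ (w : List A) (r₁ r₂ : List Q), IsRun δ w qI qF r₁ ∧ IsRun δ w qI qF r₂ ∧ r₁ ≠ r₂ := by
  obtain ⟨w, x, y, ρ₁, ρ₂, h₁, h₂, hne⟩ := h
  obtain ⟨u, ru, hu⟩ := (htrim x).1
  obtain ⟨z, rz, hz⟩ := (htrim y).2
  refine ⟨u ++ (w ++ z), _, _, hu.append (h₁.append hz), hu.append (h₂.append hz), ?_⟩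
  rw [h₁.eq_cons_tail, h₂.eq_cons_tail] at hne ⊢
  simpa using hne

/-- The automaton `A'` of the statement, with `#` encoded as `Sum.inr ()`. -/
def withLoopback {Q A : Type*} (δ : Set (Q × A × Q)) (qI qF : Q) :
    Set (Q × (A ⊕ Unit) × Q) :=
  {tr | (∃ p σ q, (p, σ, q) ∈ δ ∧ tr = (p, Sum.inl σ, q)) ∨ tr = (qF, Sum.inr (), qI)}

section Loopback

variable {Q A : Type*} {δ : Set (Q × A × Q)} {qI qF : Q}

@[simp]
lemma inl_mem_withLoopback {p p' : Q} {σ : A} :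
    (p, Sum.inl σ, p') ∈ withLoopback δ qI qF ↔ (p, σ, p') ∈ δ := by
  simp [withLoopback]

@[simp]
lemma inr_mem_withLoopback {p p' : Q} :
    (p, Sum.inr (), p') ∈ withLoopback δ qI qF ↔ p = qF ∧ p' = qI := by
  simp [withLoopback]

lemma IsRun.map_inl {w : List A} {p q : Q} {r : List Q} (h : IsRun δ w p q r) :
    IsRun (withLoopback δ qI qF) (w.map Sum.inl) p q r := by
  induction w generalizing p r with
  | nil =>
    obtain ⟨rfl, rfl⟩ := isRun_nil_iff.mp h
    exact isRun_nil_iff.mpr ⟨rfl, rfl⟩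
  | cons a w ih =>
    obtain ⟨p', r', rfl, hmem, hrun⟩ := isRun_cons_iff.mp h
    exact (ih hrun).cons (inl_mem_withLoopback.mpr hmem)

/-- `w` is the longest `#`-free prefix of `v`, and `y` is `s` if `v` has no `#` and `qF`
otherwise. -/
lemma exists_common_target_of_isRun_withLoopback (v : List (A ⊕ Unit)) (s : Q) :
    ∃ (w : List A) (y : Q), ∀ (p : Q) (r : List Q),
      IsRun (withLoopback δ qI qF) v p s r → ∃ ρ, IsRun δ w p y ρ := by
  induction v with
  | nil =>
    refine ⟨[], s, fun p r h => ⟨[p], ?_⟩⟩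
    exact isRun_nil_iff.mpr ⟨(isRun_nil_iff.mp h).1, rfl⟩
  | cons a v ih =>
    cases a with
    | inl σ =>
      obtain ⟨w, y, hw⟩ := ih
      refine ⟨σ :: w, y, fun p r h => ?_⟩
      obtain ⟨p', r', -, hmem, hrun⟩ := isRun_cons_iff.mp h
      obtain ⟨ρ, hρ⟩ := hw p' _ hrun
      exact ⟨p :: ρ, hρ.cons (inl_mem_withLoopback.mp hmem)⟩
    | inr _ =>
      refine ⟨[], qF, fun p r h => ⟨[p], ?_⟩⟩
      obtain ⟨_, _, -, hmem, -⟩ := isRun_cons_iff.mp h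
      exact isRun_nil_iff.mpr ⟨(inr_mem_withLoopback.mp hmem).1, rfl⟩

lemma hasDistinctRuns_of_isRun_withLoopback {v : List (A ⊕ Unit)} {p s : Q} {r₁ r₂ : List Q}
    (h₁ : IsRun (withLoopback δ qI qF) v p s r₁) (h₂ : IsRun (withLoopback δ qI qF) v p s r₂)
    (hne : r₁ ≠ r₂) : HasDistinctRuns δ := by
  induction v generalizing p r₁ r₂ with
  | nil =>
    exact absurd ((isRun_nil_iff.mp h₁).2.trans (isRun_nil_iff.mp h₂).2.symm) hne
  | cons a v ih =>
    obtain ⟨p₁, t₁, rfl, hm₁, hr₁⟩ := isRun_cons_iff.mp h₁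
    obtain ⟨p₂, t₂, rfl, hm₂, hr₂⟩ := isRun_cons_iff.mp h₂
    by_cases hp : p₁ = p₂
    · subst hp
      exact ih hr₁ hr₂ (fun h => hne (by rw [h]))
    cases a with
    | inr _ =>
      exact absurd ((inr_mem_withLoopback.mp hm₁).2.trans (inr_mem_withLoopback.mp hm₂).2.symm) hp
    | inl σ =>
      obtain ⟨w, y, hw⟩ := exists_common_target_of_isRun_withLoopback (δ := δ) v s
      obtain ⟨ρ₁, hρ₁⟩ := hw p₁ _ hr₁
      obtain ⟨ρ₂, hρ₂⟩ := hw p₂ _ hr₂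
      refine ⟨σ :: w, p, y, p :: ρ₁, p :: ρ₂, hρ₁.cons (inl_mem_withLoopback.mp hm₁),
        hρ₂.cons (inl_mem_withLoopback.mp hm₂), fun h => hp ?_⟩
      simpa [hρ₁.2.1, hρ₂.2.1] using congrArg List.head? (List.cons_injective h)

end Loopback

theorem eda_iff_not_unambiguous_general {Q A : Type*}
    (δ : Set (Q × A × Q)) (qI qF : Q)
    (htrim : ∀ p : Q, (∃ (u : List A) (r : List Q), IsRun δ u qI p r) ∧
                      (∃ (v : List A) (r : List Q), IsRun δ v p qF r))
    (δ' : Set (Q × (A ⊕ Unit) × Q))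
    (hδ' : δ' = {tr | (∃ p σ q, (p, σ, q) ∈ δ ∧ tr = (p, Sum.inl σ, q)) ∨
                      tr = (qF, Sum.inr (), qI)}) :
    (∃ (q : Q) (v : List (A ⊕ Unit)) (r₁ r₂ : List Q),
        v ≠ [] ∧ IsRun δ' v q q r₁ ∧ IsRun δ' v q q r₂ ∧ r₁ ≠ r₂) ↔
      ¬ (∀ (w : List A) (r₁ r₂ : List Q),
          IsRun δ w qI qF r₁ → IsRun δ w qI qF r₂ → r₁ = r₂) := by
  change δ' = withLoopback δ qI qF at hδ'
  subst hδ'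
  push Not
  constructor
  · rintro ⟨q, v, r₁, r₂, -, h₁, h₂, hne⟩
    exact (hasDistinctRuns_of_isRun_withLoopback h₁ h₂ hne).exists_ne_accepting_runs htrim
  · rintro ⟨w, r₁, r₂, h₁, h₂, hne⟩
    have hloop : IsRun (withLoopback δ qI qF) [Sum.inr ()] qF qI [qF, qI] :=
      (isRun_nil_iff.mpr ⟨rfl, rfl⟩).cons (inr_mem_withLoopback.mpr ⟨rfl, rfl⟩)
    exact ⟨qI, w.map Sum.inl ++ [Sum.inr ()], _, _, by simp,
      h₁.map_inl.append hloop, h₂.map_inl.append hloop, by simpa using hne⟩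

/-- Let `A = (Q, Σ, δ, {q_I}, {q_F})` be a trim NFA with a unique initial
state and a unique accepting state. Extend the alphabet with a fresh symbol `#`
(modelled as `Sum.inr ()`) and add the transition `(q_F, #, q_I)`, obtaining `A'`. Then
`A'` has the EDA property (some state has two distinct cycles on the same nonempty word)
if and only if `A` is not unambiguous. -/
theorem eda_iff_not_unambiguous {Q A : Type*} [Fintype Q]
    (δ : Set (Q × A × Q)) (qI qF : Q)
    (htrim : ∀ p : Q, (∃ (u : List A) (r : List Q), IsRun δ u qI p r) ∧
                      (∃ (v : List A) (r : List Q), IsRun δ v p qF r))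
    (δ' : Set (Q × (A ⊕ Unit) × Q))
    (hδ' : δ' = {tr | (∃ p σ q, (p, σ, q) ∈ δ ∧ tr = (p, Sum.inl σ, q)) ∨
                      tr = (qF, Sum.inr (), qI)}) :
    (∃ (q : Q) (v : List (A ⊕ Unit)) (r₁ r₂ : List Q),
        v ≠ [] ∧ IsRun δ' v q q r₁ ∧ IsRun δ' v q q r₂ ∧ r₁ ≠ r₂) ↔
      ¬ (∀ (w : List A) (r₁ r₂ : List Q),
          IsRun δ w qI qF r₁ → IsRun δ w qI qF r₂ → r₁ = r₂) :=
  eda_iff_not_unambiguous_general δ qI qF htrim δ' hδ'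
end

section
/- Let D₁ = (Q₁, Σ, δ₁, q₁ᴵ, F₁), D₂ = (Q₂, Σ, δ₂, q₂ᴵ, F₂) and D₃ = (Q₃, Σ, δ₃, q₃ᴵ, F₃) be deterministic finite automata over the same alphabet Σ with total transition functions, and let $ and # be two distinct symbols not in Σ. Let s and t be two fresh states and let A be the NFA over Σ ∪ {$, #} with state set Q₁ ⊎ Q₂ ⊎ Q₃ ⊎ {s, t}, unique initial state s, unique accepting state t, and transition relation consisting of: all transitions of D₁, D₂ and D₃ (as relations on their own state copies), the transitions (s, $, q₁ᴵ), (s, $, q₂ᴵ) and (t, $, q₃ᴵ), the transitions (p, #, s) for every p ∈ F₁, and the transitions (p, #, t) for every p ∈ F₂ and every p ∈ F₃. Then A has the IDA property if and only if L(D₁) ∩ L(D₂) ∩ L(D₃) ≠ ∅. -/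
/-- A (total) DFA with transition function `δ` and initial state `qI` accepts a word `w`
if running `δ` from `qI` along `w` ends in an accepting state of `F`. -/
def DFAAccepts {Q A : Type*} (δ : Q × A → Q) (qI : Q) (F : Set Q) (w : List A) : Prop :=
  w.foldl (fun q a => δ (q, a)) qI ∈ F

/-- The copy of a `Q₁`-state in the state space `(Q₁ ⊕ Q₂ ⊕ Q₃) ⊕ Bool`. -/
def emb₁ {Q₁ Q₂ Q₃ : Type*} (p : Q₁) : (Q₁ ⊕ Q₂ ⊕ Q₃) ⊕ Bool := Sum.inl (Sum.inl p)

/-- The copy of a `Q₂`-state in the state space `(Q₁ ⊕ Q₂ ⊕ Q₃) ⊕ Bool`. -/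
def emb₂ {Q₁ Q₂ Q₃ : Type*} (p : Q₂) : (Q₁ ⊕ Q₂ ⊕ Q₃) ⊕ Bool := Sum.inl (Sum.inr (Sum.inl p))

/-- The copy of a `Q₃`-state in the state space `(Q₁ ⊕ Q₂ ⊕ Q₃) ⊕ Bool`. -/
def emb₃ {Q₁ Q₂ Q₃ : Type*} (p : Q₃) : (Q₁ ⊕ Q₂ ⊕ Q₃) ⊕ Bool := Sum.inl (Sum.inr (Sum.inr p))

inductive Reaches {Q A : Type*} (δ : Set (Q × A × Q)) : List A → Q → Q → Prop
  | nil (p : Q) : Reaches δ [] p p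
  | cons {p p' q : Q} {a : A} {w : List A} :
      (p, a, p') ∈ δ → Reaches δ w p' q → Reaches δ (a :: w) p q

def IsTrap {Q A : Type*} (δ : Set (Q × A × Q)) (S : Set Q) : Prop :=
  ∀ ⦃x a y⦄, (x, a, y) ∈ δ → x ∈ S → y ∈ S

def IsDeterministicOnParts {Q A : Type*} (δ : Set (Q × A × Q)) (S : Set Q) : Prop :=
  ∀ ⦃x a y z⦄, (x, a, y) ∈ δ → (x, a, z) ∈ δ → (y ∈ S ↔ z ∈ S) → y = z

namespace Reaches

variable {Q A : Type*} {δ : Set (Q × A × Q)} {S : Set Q} {w : List A} {p q : Q}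

theorem cons_iff {a : A} : Reaches δ (a :: w) p q ↔ ∃ p', (p, a, p') ∈ δ ∧ Reaches δ w p' q :=
  ⟨fun | .cons h h' => ⟨_, h, h'⟩, fun ⟨_, h, h'⟩ => .cons h h'⟩

theorem append_iff {u v : List A} {r : Q} :
    Reaches δ (u ++ v) p r ↔ ∃ q, Reaches δ u p q ∧ Reaches δ v q r := by
  induction u generalizing p with
  | nil => exact ⟨fun h => ⟨p, .nil p, h⟩, fun ⟨_, .nil _, h⟩ => h⟩
  | cons a u ih => simp only [List.cons_append, cons_iff, ih]; aesop

theorem append_cons_iff {u v : List A} {a : A} {r : Q} :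
    Reaches δ (u ++ a :: v) p r ↔ ∃ q q', Reaches δ u p q ∧ (q, a, q') ∈ δ ∧ Reaches δ v q' r := by
  simp only [append_iff, cons_iff]
  aesop

theorem of_isRun {r : List Q} (h : IsRun δ w p q r) : Reaches δ w p q := by
  obtain ⟨hlen, hhead, hlast, hstep⟩ := h
  induction w generalizing p r with
  | nil =>
    obtain ⟨x, rfl⟩ := List.length_eq_one_iff.mp hlen
    cases hhead; cases hlast; exact .nil p
  | cons a w ih =>
    obtain ⟨x, y, r, rfl⟩ : ∃ x y r', r = x :: y :: r' := by
      rcases r with _ | ⟨x, _ | ⟨y, r⟩⟩ <;> simp_all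
    cases hhead
    exact .cons (hstep _ (by simp)) (ih (r := y :: r) (by simpa using hlen) rfl
      (by simpa using hlast) fun tr htr => hstep tr (by simp_all))

theorem exists_isRun (h : Reaches δ w p q) : ∃ r, IsRun δ w p q r := by
  induction h with
  | nil p => exact ⟨[p], rfl, rfl, rfl, by simp⟩
  | @cons p p' q a w hstep _ ih =>
    obtain ⟨r, hlen, hhead, hlast, hrun⟩ := ih
    obtain ⟨r, rfl⟩ : ∃ r', r = p' :: r' := by
      rcases r with _ | ⟨x, r⟩ <;> simp_all
    refine ⟨p :: p' :: r, by simpa using hlen, rfl, by simpa using hlast, ?_⟩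
    simp only [List.tail_cons, List.zip_cons_cons, List.mem_cons, forall_eq_or_imp]
    exact ⟨hstep, hrun⟩

theorem exists_isRun_iff : (∃ r, IsRun δ w p q r) ↔ Reaches δ w p q :=
  ⟨fun ⟨_, h⟩ => of_isRun h, exists_isRun⟩

theorem mem_of_mem (hS : IsTrap δ S) (h : Reaches δ w p q) (hp : p ∈ S) : q ∈ S := by
  induction h with
  | nil => exact hp
  | cons hstep _ ih => exact ih (hS hstep hp)

theorem eq_of_mem (hS : IsTrap δ S) (hdet : IsDeterministicOnParts δ S) (hp : p ∈ S)
    {q₁ q₂ : Q} (h₁ : Reaches δ w p q₁) (h₂ : Reaches δ w p q₂) : q₁ = q₂ := by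
  induction h₁ with
  | nil => cases h₂; rfl
  | cons hstep₁ _ ih =>
    obtain ⟨_, hstep₂, h₂⟩ := cons_iff.mp h₂
    have hp₁ := hS hstep₁ hp
    obtain rfl := hdet hstep₁ hstep₂ (iff_of_true hp₁ (hS hstep₂ hp))
    exact ih hp₁ h₂

theorem eq_of_not_mem (hS : IsTrap δ S) (hdet : IsDeterministicOnParts δ S)
    {q₁ q₂ : Q} (h₁ : Reaches δ w p q₁) (h₂ : Reaches δ w p q₂) (hq₁ : q₁ ∉ S) (hq₂ : q₂ ∉ S) :
    q₁ = q₂ := by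
  induction h₁ with
  | nil => cases h₂; rfl
  | cons hstep₁ h₁ ih =>
    obtain ⟨_, hstep₂, h₂⟩ := cons_iff.mp h₂
    obtain rfl := hdet hstep₁ hstep₂
      (iff_of_false (fun h => hq₁ (h₁.mem_of_mem hS h)) (fun h => hq₂ (h₂.mem_of_mem hS h)))
    exact ih h₂ hq₁

theorem exists_crossing (h : Reaches δ w p q) (hp : p ∉ S) (hq : q ∈ S) :
    ∃ u a v x y, w = u ++ a :: v ∧ Reaches δ u p x ∧ (x, a, y) ∈ δ ∧ x ∉ S ∧ y ∈ S ∧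
      Reaches δ v y q := by
  induction h with
  | nil => exact absurd hq hp
  | @cons p p' q a w hstep h ih =>
    by_cases hp' : p' ∈ S
    · exact ⟨[], a, w, p, p', rfl, .nil p, hstep, hp, hp', h⟩
    · obtain ⟨u, b, v, x, y, rfl, hu, hxy, hx, hy, hv⟩ := ih hp' hq
      exact ⟨a :: u, b, v, x, y, rfl, .cons hstep hu, hxy, hx, hy, hv⟩

theorem map_foldl {B P : Type*} (e : P → Q) (f : B → A)
    (d : P × B → P) (hd : ∀ p b, (e p, f b, e (d (p, b))) ∈ δ) (w : List B) (p : P) :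
    Reaches δ (w.map f) (e p) (e (w.foldl (fun q b => d (q, b)) p)) := by
  induction w generalizing p with
  | nil => exact .nil _
  | cons b w ih => exact .cons (hd p b) (ih _)

theorem map_append_of_dfaAccepts {B P : Type*} (e : P → Q)
    (f : B → A) (d : P × B → P) (hd : ∀ p b, (e p, f b, e (d (p, b))) ∈ δ) {F : Set P} {a : A}
    {z : Q} (hF : ∀ x ∈ F, (e x, a, z) ∈ δ) {p : P} {w : List B} (hw : DFAAccepts d p F w) :
    Reaches δ (w.map f ++ [a]) (e p) z :=
  append_iff.mpr ⟨_, map_foldl e f d hd w p, .cons (hF _ hw) (.nil z)⟩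

end Reaches

section Reduction

variable {Q₁ Q₂ Q₃ A : Type*} (δ₁ : Q₁ × A → Q₁) (q₁I : Q₁) (F₁ : Set Q₁)
  (δ₂ : Q₂ × A → Q₂) (q₂I : Q₂) (F₂ : Set Q₂) (δ₃ : Q₃ × A → Q₃) (q₃I : Q₃) (F₃ : Set Q₃)

def reductionTrans :
    Set (((Q₁ ⊕ Q₂ ⊕ Q₃) ⊕ Bool) × (A ⊕ Bool) × ((Q₁ ⊕ Q₂ ⊕ Q₃) ⊕ Bool)) :=
  {tr |
    (∃ p σ, tr = (emb₁ p, Sum.inl σ, emb₁ (δ₁ (p, σ)))) ∨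
    (∃ p σ, tr = (emb₂ p, Sum.inl σ, emb₂ (δ₂ (p, σ)))) ∨
    (∃ p σ, tr = (emb₃ p, Sum.inl σ, emb₃ (δ₃ (p, σ)))) ∨
    tr = (Sum.inr false, Sum.inr false, emb₁ q₁I) ∨
    tr = (Sum.inr false, Sum.inr false, emb₂ q₂I) ∨
    tr = (Sum.inr true, Sum.inr false, emb₃ q₃I) ∨
    (∃ p, p ∈ F₁ ∧ tr = (emb₁ p, Sum.inr true, Sum.inr false)) ∨
    (∃ p, p ∈ F₂ ∧ tr = (emb₂ p, Sum.inr true, Sum.inr true)) ∨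
    (∃ p, p ∈ F₃ ∧ tr = (emb₃ p, Sum.inr true, Sum.inr true))}

def rightStates : Set ((Q₁ ⊕ Q₂ ⊕ Q₃) ⊕ Bool) :=
  Set.range emb₂ ∪ Set.range emb₃ ∪ {Sum.inr true}

variable {δ₁ q₁I F₁ δ₂ q₂I F₂ δ₃ q₃I F₃}

local notation "T" => reductionTrans δ₁ q₁I F₁ δ₂ q₂I F₂ δ₃ q₃I F₃

theorem isTrap_rightStates : IsTrap T rightStates := by
  intro x a y
  simp only [reductionTrans, rightStates, emb₁, emb₂, emb₃, Set.mem_ofPred_eq, Set.mem_union,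
    Set.mem_range, Set.mem_singleton_iff]
  aesop

theorem isDeterministicOnParts_rightStates : IsDeterministicOnParts T rightStates := by
  intro x a y z
  simp only [reductionTrans, rightStates, emb₁, emb₂, emb₃, Set.mem_ofPred_eq, Set.mem_union,
    Set.mem_range, Set.mem_singleton_iff]
  aesop

theorem eq_emb₂_of_not_mem_of_mem {x y a} (h : (x, a, y) ∈ T) (hx : x ∉ rightStates)
    (hy : y ∈ rightStates) : a = Sum.inr false ∧ y = emb₂ q₂I := by
  simp only [reductionTrans, rightStates, emb₁, emb₂, emb₃, Set.mem_ofPred_eq, Set.mem_union,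
    Set.mem_range, Set.mem_singleton_iff] at *
  aesop

theorem eq_emb₁_of_dollar_of_not_mem {x y} (h : (x, Sum.inr false, y) ∈ T)
    (hy : y ∉ rightStates) : y = emb₁ q₁I := by
  simp only [reductionTrans, rightStates, emb₁, emb₂, emb₃, Set.mem_ofPred_eq, Set.mem_union,
    Set.mem_range, Set.mem_singleton_iff] at *
  aesop

theorem eq_emb₃_of_dollar_of_mem {x y} (h : (x, Sum.inr false, y) ∈ T)
    (hx : x ∈ rightStates) : y = emb₃ q₃I := by
  simp only [reductionTrans, rightStates, emb₁, emb₂, emb₃, Set.mem_ofPred_eq, Set.mem_union,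
    Set.mem_range, Set.mem_singleton_iff] at *
  aesop

theorem exists_dfaAccepts_of_reaches {v : List (A ⊕ Bool)} {p₁ : Q₁} {p₂ : Q₂} {p₃ : Q₃} {x q}
    (h₁ : Reaches T v (emb₁ p₁) x) (h₂ : Reaches T v (emb₂ p₂) q) (h₃ : Reaches T v (emb₃ p₃) q) :
    ∃ w, DFAAccepts δ₁ p₁ F₁ w ∧ DFAAccepts δ₂ p₂ F₂ w ∧ DFAAccepts δ₃ p₃ F₃ w := by
  induction v generalizing p₁ p₂ p₃ with
  | nil => cases h₂; cases h₃
  | cons a v ih =>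
    obtain ⟨y₁, hs₁, h₁⟩ := Reaches.cons_iff.mp h₁
    obtain ⟨y₂, hs₂, h₂⟩ := Reaches.cons_iff.mp h₂
    obtain ⟨y₃, hs₃, h₃⟩ := Reaches.cons_iff.mp h₃
    rcases a with σ | (_ | _)
    · obtain rfl : y₁ = emb₁ (δ₁ (p₁, σ)) := by simpa [reductionTrans, emb₁, emb₂, emb₃] using hs₁
      obtain rfl : y₂ = emb₂ (δ₂ (p₂, σ)) := by simpa [reductionTrans, emb₁, emb₂, emb₃] using hs₂
      obtain rfl : y₃ = emb₃ (δ₃ (p₃, σ)) := by simpa [reductionTrans, emb₁, emb₂, emb₃] using hs₃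
      obtain ⟨w, hw⟩ := ih h₁ h₂ h₃
      exact ⟨σ :: w, hw⟩
    · simp [reductionTrans, emb₁, emb₂, emb₃] at hs₁
    · refine ⟨[], ?_, ?_, ?_⟩ <;> simp_all [reductionTrans, emb₁, emb₂, emb₃, DFAAccepts]

theorem exists_dfaAccepts_of_ida {p q : (Q₁ ⊕ Q₂ ⊕ Q₃) ⊕ Bool} {v : List (A ⊕ Bool)}
    (hne : p ≠ q) (hpp : Reaches T v p p) (hpq : Reaches T v p q) (hqq : Reaches T v q q) :
    ∃ w, DFAAccepts δ₁ q₁I F₁ w ∧ DFAAccepts δ₂ q₂I F₂ w ∧ DFAAccepts δ₃ q₃I F₃ w := by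
  have hp : p ∉ rightStates := fun hp =>
    hne (hpp.eq_of_mem isTrap_rightStates isDeterministicOnParts_rightStates hp hpq)
  have hq : q ∈ rightStates := by
    by_contra hq
    exact hne (hpp.eq_of_not_mem isTrap_rightStates isDeterministicOnParts_rightStates hpq hp hq)
  obtain ⟨u, a, v, x, y, rfl, -, hxy, hx, hy, hv₂⟩ := hpq.exists_crossing hp hq
  obtain ⟨rfl, rfl⟩ := eq_emb₂_of_not_mem_of_mem hxy hx hy
  obtain ⟨_, y₁, -, hy₁, hv₁⟩ := Reaches.append_cons_iff.mp hpp
  obtain ⟨x₃, y₃, hu₃, hy₃, hv₃⟩ := Reaches.append_cons_iff.mp hqq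
  obtain rfl := eq_emb₁_of_dollar_of_not_mem hy₁ fun h => hp (hv₁.mem_of_mem isTrap_rightStates h)
  obtain rfl := eq_emb₃_of_dollar_of_mem hy₃ (hu₃.mem_of_mem isTrap_rightStates hq)
  exact exists_dfaAccepts_of_reaches hv₁ hv₂ hv₃

theorem reaches_of_dfaAccepts {w : List A} (h₁ : DFAAccepts δ₁ q₁I F₁ w)
    (h₂ : DFAAccepts δ₂ q₂I F₂ w) (h₃ : DFAAccepts δ₃ q₃I F₃ w) :
    let v := Sum.inr false :: (w.map Sum.inl ++ [Sum.inr true])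
    Reaches T v (Sum.inr false) (Sum.inr false) ∧ Reaches T v (Sum.inr false) (Sum.inr true) ∧
      Reaches T v (Sum.inr true) (Sum.inr true) := by
  refine ⟨.cons ?_ (.map_append_of_dfaAccepts emb₁ Sum.inl δ₁ ?_ ?_ h₁),
    .cons ?_ (.map_append_of_dfaAccepts emb₂ Sum.inl δ₂ ?_ ?_ h₂),
    .cons ?_ (.map_append_of_dfaAccepts emb₃ Sum.inl δ₃ ?_ ?_ h₃)⟩ <;>
    simp [reductionTrans, emb₁, emb₂, emb₃]

end Reduction

theorem ida_iff_three_dfa_intersection_general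
    {Q₁ Q₂ Q₃ A : Type*}
    (δ₁ : Q₁ × A → Q₁) (q₁I : Q₁) (F₁ : Set Q₁)
    (δ₂ : Q₂ × A → Q₂) (q₂I : Q₂) (F₂ : Set Q₂)
    (δ₃ : Q₃ × A → Q₃) (q₃I : Q₃) (F₃ : Set Q₃)
    (s t : (Q₁ ⊕ Q₂ ⊕ Q₃) ⊕ Bool) (hs : s = Sum.inr false) (ht : t = Sum.inr true)
    (δA : Set (((Q₁ ⊕ Q₂ ⊕ Q₃) ⊕ Bool) × (A ⊕ Bool) × ((Q₁ ⊕ Q₂ ⊕ Q₃) ⊕ Bool)))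
    (hδA : δA = {tr |
      (∃ p σ, tr = (emb₁ p, Sum.inl σ, emb₁ (δ₁ (p, σ)))) ∨
      (∃ p σ, tr = (emb₂ p, Sum.inl σ, emb₂ (δ₂ (p, σ)))) ∨
      (∃ p σ, tr = (emb₃ p, Sum.inl σ, emb₃ (δ₃ (p, σ)))) ∨
      tr = (s, Sum.inr false, emb₁ q₁I) ∨
      tr = (s, Sum.inr false, emb₂ q₂I) ∨
      tr = (t, Sum.inr false, emb₃ q₃I) ∨
      (∃ p, p ∈ F₁ ∧ tr = (emb₁ p, Sum.inr true, s)) ∨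
      (∃ p, p ∈ F₂ ∧ tr = (emb₂ p, Sum.inr true, t)) ∨
      (∃ p, p ∈ F₃ ∧ tr = (emb₃ p, Sum.inr true, t))}) :
    (∃ (p q : (Q₁ ⊕ Q₂ ⊕ Q₃) ⊕ Bool) (v : List (A ⊕ Bool)), p ≠ q ∧ v ≠ [] ∧
        (∃ r, IsRun δA v p p r) ∧ (∃ r, IsRun δA v p q r) ∧ (∃ r, IsRun δA v q q r)) ↔
      ∃ w : List A, DFAAccepts δ₁ q₁I F₁ w ∧ DFAAccepts δ₂ q₂I F₂ w ∧
        DFAAccepts δ₃ q₃I F₃ w := by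
  subst hs ht hδA
  simp only [Reaches.exists_isRun_iff]
  constructor
  · rintro ⟨p, q, v, hne, -, hpp, hpq, hqq⟩
    exact exists_dfaAccepts_of_ida hne hpp hpq hqq
  · rintro ⟨w, h₁, h₂, h₃⟩
    exact ⟨_, _, _, by simp, by simp, reaches_of_dfaAccepts h₁ h₂ h₃⟩

/-- Given three DFAs `D₁, D₂, D₃` over the alphabet `A`, two fresh
symbols `$ = Sum.inr false` and `# = Sum.inr true`, and two fresh states
`s = Sum.inr false` and `t = Sum.inr true`, let `A'` be the NFA with states
`(Q₁ ⊕ Q₂ ⊕ Q₃) ⊕ Bool`, initial state `s`, accepting state `t` and the transitions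
described in the statement. Then `A'` has the IDA property if and only if
`L(D₁) ∩ L(D₂) ∩ L(D₃) ≠ ∅`. -/
theorem ida_iff_three_dfa_intersection
    {Q₁ Q₂ Q₃ A : Type*} [Fintype Q₁] [Fintype Q₂] [Fintype Q₃]
    (δ₁ : Q₁ × A → Q₁) (q₁I : Q₁) (F₁ : Set Q₁)
    (δ₂ : Q₂ × A → Q₂) (q₂I : Q₂) (F₂ : Set Q₂)
    (δ₃ : Q₃ × A → Q₃) (q₃I : Q₃) (F₃ : Set Q₃)
    (s t : (Q₁ ⊕ Q₂ ⊕ Q₃) ⊕ Bool) (hs : s = Sum.inr false) (ht : t = Sum.inr true)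
    (δA : Set (((Q₁ ⊕ Q₂ ⊕ Q₃) ⊕ Bool) × (A ⊕ Bool) × ((Q₁ ⊕ Q₂ ⊕ Q₃) ⊕ Bool)))
    (hδA : δA = {tr |
      (∃ p σ, tr = (emb₁ p, Sum.inl σ, emb₁ (δ₁ (p, σ)))) ∨
      (∃ p σ, tr = (emb₂ p, Sum.inl σ, emb₂ (δ₂ (p, σ)))) ∨
      (∃ p σ, tr = (emb₃ p, Sum.inl σ, emb₃ (δ₃ (p, σ)))) ∨
      tr = (s, Sum.inr false, emb₁ q₁I) ∨
      tr = (s, Sum.inr false, emb₂ q₂I) ∨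
      tr = (t, Sum.inr false, emb₃ q₃I) ∨
      (∃ p, p ∈ F₁ ∧ tr = (emb₁ p, Sum.inr true, s)) ∨
      (∃ p, p ∈ F₂ ∧ tr = (emb₂ p, Sum.inr true, t)) ∨
      (∃ p, p ∈ F₃ ∧ tr = (emb₃ p, Sum.inr true, t))}) :
    (∃ (p q : (Q₁ ⊕ Q₂ ⊕ Q₃) ⊕ Bool) (v : List (A ⊕ Bool)), p ≠ q ∧ v ≠ [] ∧
        (∃ r, IsRun δA v p p r) ∧ (∃ r, IsRun δA v p q r) ∧ (∃ r, IsRun δA v q q r)) ↔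
      ∃ w : List A, DFAAccepts δ₁ q₁I F₁ w ∧ DFAAccepts δ₂ q₂I F₂ w ∧
        DFAAccepts δ₃ q₃I F₃ w :=
  ida_iff_three_dfa_intersection_general δ₁ q₁I F₁ δ₂ q₂I F₂ δ₃ q₃I F₃ s t hs ht δA hδA
end
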